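/- arXiv:2103.15471 — 2 statements merged into one kernel-verified Lean document; each statement's English description precedes it below -/
import Mathlib

section
/- Let F be a field, r ≥ 1, and λ_1, ..., λ_r distinct elements of F. Let α = s̄^m and define block matrices H_{t,i} ∈ F^{α×α} (t ∈ [0,r-1], i ∈ [r]) such that H_{t,i} has diagonal entries λ_i^t and all nonzero off-diagonal entries H_{t,i}(a,b) occur only when b = a(τ_i, v) for some v ∈ [1, s̄-1] with the τ_i-th base-s̄ digit of a equal to 0 (where τ_i ∈ [0, m-1] depends on i). Then the rα × rα matrix H whose (t,i) block is H_{t,i} is invertible. -/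
/-!
Grade the index `a ∈ [0, s̄^m)` by its number `w(a)` of zero digits. An off-diagonal entry in row
`a` and column `b` can only be nonzero when `b` arises from `a` by turning a zero digit into a
nonzero one, so `w(b) < w(a)`. Ordering the indices by decreasing `w` (ties broken by `a`)
therefore makes `H` block triangular, with one `r × r` diagonal block per `a`. That block is
`(λ_i^t)_{t,i}`, a transposed Vandermonde matrix in the distinct `λ_i`, hence invertible.
-/

/-- the τ-th digit of `a` in base `s`. -/
def digit (s a τ : ℕ) : ℕ := a / s ^ τ % s

/-- replace the τ-th base-`s` digit of `a` by `v`. -/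
def replaceDigit (s a τ v : ℕ) : ℕ := a - digit s a τ * s ^ τ + v * s ^ τ

open Finset Matrix OrderDual

section Digits

variable {s a n c τ τ' v : ℕ}

lemma digit_add_mul_pow_of_lt (hs : 0 < s) (h : τ' < τ) :
    digit s (n + c * s ^ τ) τ' = digit s n τ' := by
  obtain ⟨k, rfl⟩ := Nat.exists_eq_add_of_lt h
  have : n + c * s ^ (τ' + k + 1) = n + c * s ^ k * s * s ^ τ' := by ring
  rw [digit, digit, this, Nat.add_mul_div_right _ _ (pow_pos hs _), Nat.add_mul_mod_self_right]

lemma digit_add_mul_pow_of_le (hn : n < s ^ τ) (h : τ ≤ τ') :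
    digit s (n + c * s ^ τ) τ' = digit s c (τ' - τ) := by
  obtain ⟨k, rfl⟩ := Nat.exists_eq_add_of_le h
  rw [digit, digit, pow_add, ← Nat.div_div_eq_div_mul,
    Nat.add_mul_div_right _ _ (Nat.zero_lt_of_lt hn), Nat.div_eq_of_lt hn, zero_add,
    Nat.add_sub_cancel_left]

lemma digit_add_of_mod_eq_zero (hn : n % s = 0) (hv : v < s) (k : ℕ) :
    digit s (n + v) k = if k = 0 then v else digit s n k := by
  obtain ⟨q, rfl⟩ := Nat.dvd_of_mod_eq_zero hn
  rcases k with _ | k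
  · simp [digit, Nat.mod_eq_of_lt hv]
  · have hs : 0 < s := by omega
    rw [if_neg k.succ_ne_zero, digit, digit, pow_succ', ← Nat.div_div_eq_div_mul,
      ← Nat.div_div_eq_div_mul, add_comm, Nat.add_mul_div_left _ _ hs, Nat.div_eq_of_lt hv,
      zero_add, Nat.mul_div_cancel_left _ hs]

lemma replaceDigit_of_digit_eq_zero (h0 : digit s a τ = 0) :
    replaceDigit s a τ v = a + v * s ^ τ := by
  simp [replaceDigit, h0]

lemma digit_replaceDigit (h0 : digit s a τ = 0) (hv : v < s) :
    digit s (replaceDigit s a τ v) τ' = if τ' = τ then v else digit s a τ' := by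
  have hs : 0 < s := by omega
  have hlow : a % s ^ τ < s ^ τ := Nat.mod_lt _ (pow_pos hs τ)
  have ha : a = a % s ^ τ + a / s ^ τ * s ^ τ := (Nat.mod_add_div' a _).symm
  have hrepl : replaceDigit s a τ v = a % s ^ τ + (a / s ^ τ + v) * s ^ τ := by
    rw [replaceDigit_of_digit_eq_zero h0]; nth_rw 1 [ha]; ring
  rw [hrepl]
  rcases lt_or_ge τ' τ with h | h
  · rw [if_neg h.ne, digit_add_mul_pow_of_lt hs h]
    conv_rhs => rw [ha, digit_add_mul_pow_of_lt hs h]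
  · rw [digit_add_mul_pow_of_le hlow h, digit_add_of_mod_eq_zero h0 hv]
    conv_rhs => rw [ha, digit_add_mul_pow_of_le hlow h]
    simp only [Nat.sub_eq_zero_iff_le, h.ge_iff_eq']

def zeroDigits (s m a : ℕ) : Finset ℕ := (range m).filter fun t => digit s a t = 0

lemma zeroDigits_replaceDigit (h0 : digit s a τ = 0) (hv0 : 0 < v) (hv : v < s) (m : ℕ) :
    zeroDigits s m (replaceDigit s a τ v) = (zeroDigits s m a).erase τ := by
  ext t
  by_cases ht : t = τ <;> simp [zeroDigits, digit_replaceDigit h0 hv, ht, hv0.ne']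

lemma card_zeroDigits_replaceDigit_lt {m : ℕ} (h0 : digit s a τ = 0) (hτ : τ < m) (hv0 : 0 < v)
    (hv : v < s) : #(zeroDigits s m (replaceDigit s a τ v)) < #(zeroDigits s m a) := by
  rw [zeroDigits_replaceDigit h0 hv0 hv]
  exact card_erase_lt_of_mem (by simp [zeroDigits, hτ, h0])

end Digits

theorem Matrix.BlockTriangular.det_eq_prod_snd_blocks {R ι κ α : Type*} [CommRing R]
    [Fintype ι] [DecidableEq ι] [Fintype κ] [DecidableEq κ] [LinearOrder α]
    {M : Matrix (ι × κ) (ι × κ) R} {f : κ → α} (hf : Function.Injective f)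
    (hM : M.BlockTriangular (f ∘ Prod.snd)) :
    M.det = ∏ k, (of fun i j => M (i, k) (j, k)).det := by
  have hblock (k : κ) :
      (M.toSquareBlock (f ∘ Prod.snd) (f k)).det = (of fun i j => M (i, k) (j, k)).det := by
    let e : ι ≃ {p : ι × κ // f p.2 = f k} :=
      { toFun := fun i => ⟨(i, k), rfl⟩
        invFun := fun p => p.1.1
        left_inv := fun _ => rfl
        right_inv := fun ⟨(i, k'), h⟩ => by cases hf h; rfl }
    rw [← det_submatrix_equiv_self e]
    rfl
  calc M.det = ∏ a ∈ univ.image f, (M.toSquareBlock (f ∘ Prod.snd) a).det := by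
        refine hM.det.trans (prod_subset (fun a ha => ?_) fun a _ ha => ?_)
        · obtain ⟨p, -, rfl⟩ := mem_image.1 ha
          exact mem_image_of_mem f (mem_univ p.2)
        · have : IsEmpty {p // (f ∘ Prod.snd) p = a} :=
            ⟨fun p => ha (mem_image.2 ⟨p.1, mem_univ _, p.2⟩)⟩
          exact det_isEmpty
    _ = ∏ k, (M.toSquareBlock (f ∘ Prod.snd) (f k)).det := prod_image hf.injOn
    _ = ∏ k, (of fun i j => M (i, k) (j, k)).det := prod_congr rfl fun k _ => hblock k

theorem Matrix.blockTriangular_of_offDiag_lt {R ι κ β : Type*} [Zero R] [LinearOrder κ]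
    [LinearOrder β] {M : Matrix (ι × κ) (ι × κ) R} (w : κ → β)
    (hM : ∀ p q, p.2 ≠ q.2 → M p q ≠ 0 → w q.2 < w p.2) :
    M.BlockTriangular fun p => toDual (toLex (w p.2, p.2)) := by
  intro p q hlt
  by_contra hpq
  rw [toDual_lt_toDual, Prod.Lex.toLex_lt_toLex] at hlt
  by_cases h : p.2 = q.2
  · simp [h] at hlt
  · have := hM p q h hpq
    rcases hlt with hlt | ⟨heq, -⟩ <;> order

theorem block_matrix_invertible_general
    (F : Type*) [Field F] (r sbar m : ℕ)
    (lam : Fin r → F) (hlam : Function.Injective lam)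
    (τ : Fin r → ℕ) (hτ : ∀ i, τ i < m)
    (Hmat : Fin r → Fin r → Matrix (Fin (sbar ^ m)) (Fin (sbar ^ m)) F)
    (hdiag : ∀ t i a, Hmat t i a a = lam i ^ (t : ℕ))
    (hoff : ∀ t i (a b : Fin (sbar ^ m)), a ≠ b → Hmat t i a b ≠ 0 →
      digit sbar (a : ℕ) (τ i) = 0 ∧
      ∃ v, 1 ≤ v ∧ v ≤ sbar - 1 ∧ (b : ℕ) = replaceDigit sbar (a : ℕ) (τ i) v) :
    (Matrix.of fun (p q : Fin r × Fin (sbar ^ m)) => Hmat p.1 q.1 p.2 q.2).det ≠ 0 := by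
  set H : Matrix (Fin r × Fin (sbar ^ m)) (Fin r × Fin (sbar ^ m)) F :=
    of fun p q => Hmat p.1 q.1 p.2 q.2
  set w : Fin (sbar ^ m) → ℕ := fun a => #(zeroDigits sbar m a)
  have hgrade : ∀ p q, p.2 ≠ q.2 → H p q ≠ 0 → w q.2 < w p.2 := by
    intro p q hne hpq
    obtain ⟨h0, v, hv0, hv, hq⟩ := hoff _ _ _ _ hne hpq
    simp only [w, hq]
    exact card_zeroDigits_replaceDigit_lt h0 (hτ q.1) hv0 (by omega)
  have hinj : Function.Injective fun a => toDual (toLex (w a, a)) :=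
    fun a b hab => congrArg Prod.snd (toLex.injective (toDual.injective hab))
  rw [(blockTriangular_of_offDiag_lt w hgrade).det_eq_prod_snd_blocks hinj,
    prod_ne_zero_iff]
  intro a _
  have hvdm : (of fun t i => H (t, a) (i, a)) = (vandermonde lam)ᵀ := by
    ext t i
    exact hdiag t i a
  rw [hvdm, det_transpose]
  exact det_vandermonde_ne_zero_iff.2 hlam

theorem block_matrix_invertible
    (F : Type*) [Field F] (r sbar m : ℕ) (hr : 1 ≤ r) (hs : 2 ≤ sbar) (hm : 1 ≤ m)
    (lam : Fin r → F) (hlam : Function.Injective lam)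
    (τ : Fin r → ℕ) (hτ : ∀ i, τ i < m)
    (Hmat : Fin r → Fin r → Matrix (Fin (sbar ^ m)) (Fin (sbar ^ m)) F)
    (hdiag : ∀ t i a, Hmat t i a a = lam i ^ (t : ℕ))
    (hoff : ∀ t i (a b : Fin (sbar ^ m)), a ≠ b → Hmat t i a b ≠ 0 →
      digit sbar (a : ℕ) (τ i) = 0 ∧
      ∃ v, 1 ≤ v ∧ v ≤ sbar - 1 ∧ (b : ℕ) = replaceDigit sbar (a : ℕ) (τ i) v) :
    (Matrix.of fun (p q : Fin r × Fin (sbar ^ m)) => Hmat p.1 q.1 p.2 q.2).det ≠ 0 :=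
  block_matrix_invertible_general F r sbar m lam hlam τ hτ Hmat hdiag hoff
end

section
/- Let F be a field, and suppose an (n,k;α) array code C defined by parity-check equations Σ_{e,g} H_{(e,g)} c_{(e,g)}^T = 0 admits, for a fixed rack index e*, a matrix S ∈ F^{r̄β × rα} satisfying: (a) S·H_{(e*,g)} = P_{e*} Q_{(e*,g)} with Q_{(e*,g)} invertible α×α matrices and P_{e*} ∈ F^{r̄β×α}; (b) for e ≠ e*, S·H_{(e,g)} = P_e R_e Q_{(e,g)} with P_e ∈ F^{r̄β×β}, R_e ∈ F^{β×α}; (c) for any choice of n̄ - d̄ - 1 racks e_1,...,e_{n̄-d̄-1} ≠ e*, the matrix (P_{e*} | P_{e_1} | ... | P_{e_{n̄-d̄-1}}) ∈ F^{r̄β×r̄β} is invertible. Then for any set H of d̄ racks not containing e*, the vector c̃_{e*} := Σ_g Q_{(e*,g)} c_{(e*,g)}^T is determined by the vectors {R_e Σ_g Q_{(e,g)} c_{(e,g)}^T : e ∈ H}, each of which lies in F^β. -/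
/-!
Multiplying the parity checks of a codeword by `S` turns them, rack by rack, into the single
relation `P_{e*} c̃_{e*} + Σ_{e ≠ e*} P_e (R_e c̃_e) = 0`. By linearity it suffices to show that
`c̃_{e*} = 0` whenever a codeword has `R_e c̃_e = 0` on the `d̄` helper racks. The relation then
only involves `P_{e*}` and the `n̄ - d̄ - 1` blocks `P_e` of the remaining racks, and condition (c)
says that these blocks have independent columns.
-/

section RackSum

open Matrix

variable {F ι γ m n : Type*} [Field F] [Fintype γ] [Fintype n]

/-- The paper's rack vector `c̃_e`. -/
def rackSum (Q : ι × γ → Matrix m n F) (c : ι × γ → n → F) (e : ι) : m → F :=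
  ∑ g, Q (e, g) *ᵥ c (e, g)

lemma rackSum_sub (Q : ι × γ → Matrix m n F) (c c' : ι × γ → n → F) (e : ι) :
    rackSum Q (c - c') e = rackSum Q c e - rackSum Q c' e := by
  simp only [rackSum, Pi.sub_apply, mulVec_sub, Finset.sum_sub_distrib]

lemma sum_mulVec_mulVec_eq_mulVec_rackSum {r s l : Type*} [Fintype r] [Fintype l]
    (S : Matrix s r F) (Hm : ι × γ → Matrix r n F) (A : Matrix s l F)
    (Q : ι × γ → Matrix l n F) (c : ι × γ → n → F) (e : ι)
    (hS : ∀ g, S * Hm (e, g) = A * Q (e, g)) :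
    ∑ g, S *ᵥ (Hm (e, g) *ᵥ c (e, g)) = A *ᵥ rackSum Q c e := by
  simp only [rackSum, mulVec_sum, mulVec_mulVec, hS]

end RackSum

section Repair

open Matrix

variable {F ι γ r s n l m : Type*} [Field F] [Fintype ι] [DecidableEq ι] [Fintype γ]
  [Fintype r] [Fintype n] [Fintype l] [Fintype m]

lemma rack_relation_of_parity (S : Matrix s r F) (Hm : ι × γ → Matrix r n F)
    (Pstar : Matrix s m F) (P : ι → Matrix s l F) (R : ι → Matrix l m F)
    (Q : ι × γ → Matrix m n F) (estar : ι)
    (ha : ∀ g, S * Hm (estar, g) = Pstar * Q (estar, g))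
    (hb : ∀ e, e ≠ estar → ∀ g, S * Hm (e, g) = P e * R e * Q (e, g))
    (c : ι × γ → n → F) (hpar : ∑ i, Hm i *ᵥ c i = 0) :
    Pstar *ᵥ rackSum Q c estar + ∑ e ∈ {estar}ᶜ, P e *ᵥ (R e *ᵥ rackSum Q c e) = 0 := by
  have hS : ∑ e, ∑ g, S *ᵥ (Hm (e, g) *ᵥ c (e, g)) = 0 := by
    rw [← Fintype.sum_prod_type (fun i => S *ᵥ (Hm i *ᵥ c i)), ← mulVec_sum, hpar, mulVec_zero]
  rw [← Finset.sum_compl_add_sum {estar}, Finset.sum_singleton,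
    sum_mulVec_mulVec_eq_mulVec_rackSum S Hm Pstar Q c estar ha, add_comm] at hS
  refine Eq.trans (congrArg _ (Finset.sum_congr rfl fun e he => ?_)) hS
  rw [sum_mulVec_mulVec_eq_mulVec_rackSum S Hm (P e * R e) Q c e
    (hb e (Finset.mem_compl.mp he ∘ Finset.mem_singleton.mpr)), mulVec_mulVec]

end Repair

section IndependentBlocks

open Matrix

variable {F ι s m l : Type*} [Field F] [Fintype m] [Fintype l]

/-- Condition (c): for any `k` distinct racks `e_i ≠ e*`, the block matrix
`(P_{e*} | P_{e_1} | … | P_{e_k})` has trivial kernel. -/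
def HasIndependentBlocks (Pstar : Matrix s m F) (P : ι → Matrix s l F) (estar : ι) (k : ℕ) :
    Prop :=
  ∀ f : Fin k → ι, Function.Injective f → (∀ i, f i ≠ estar) →
    ∀ x : m ⊕ (Fin k × l) → F,
      (∀ p, (∑ a, Pstar p a * x (Sum.inl a)) +
        ∑ q : Fin k × l, P (f q.1) p q.2 * x (Sum.inr q) = 0) →
      x = 0

lemma HasIndependentBlocks.eq_zero {Pstar : Matrix s m F} {P : ι → Matrix s l F} {estar : ι}
    {k : ℕ} (hP : HasIndependentBlocks Pstar P estar k) {T : Finset ι} (hT : T.card = k)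
    (hTe : estar ∉ T) {v : m → F} {w : ι → l → F}
    (hrel : Pstar *ᵥ v + ∑ e ∈ T, P e *ᵥ w e = 0) : v = 0 := by
  let f : Fin k ≃ T := (T.equivFinOfCardEq hT).symm
  have hsum : ∑ e ∈ T, P e *ᵥ w e = ∑ i, P (f i) *ᵥ w (f i) :=
    (Finset.sum_coe_sort T fun e => P e *ᵥ w e).symm.trans
      (f.sum_comp fun e : T => P e *ᵥ w e).symm
  have hx := hP (fun i => f i) (Subtype.val_injective.comp f.injective)
    (fun i hi => hTe (hi ▸ (f i).2)) (Sum.elim v fun q => w (f q.1) q.2) fun p => by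
      simpa [hsum, mulVec, dotProduct, Fintype.sum_prod_type] using congrFun hrel p
  funext a
  simpa using congrFun hx (Sum.inl a)

end IndependentBlocks

theorem repair_framework_general
    (F : Type*) [Field F] (nbar u kbar dbar u0 α β : ℕ)
    (Hm : Fin nbar × Fin u → Matrix (Fin ((nbar * u - (kbar * u + u0)) * α)) (Fin α) F)
    (estar : Fin nbar)
    (S : Matrix (Fin ((nbar - kbar) * β)) (Fin ((nbar * u - (kbar * u + u0)) * α)) F)
    (Pstar : Matrix (Fin ((nbar - kbar) * β)) (Fin α) F)
    (P : Fin nbar → Matrix (Fin ((nbar - kbar) * β)) (Fin β) F)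
    (R : Fin nbar → Matrix (Fin β) (Fin α) F)
    (Q : Fin nbar × Fin u → Matrix (Fin α) (Fin α) F)
    (ha : ∀ g, S * Hm (estar, g) = Pstar * Q (estar, g))
    (hb : ∀ e, e ≠ estar → ∀ g, S * Hm (e, g) = P e * R e * Q (e, g))
    (hc : ∀ f : Fin (nbar - dbar - 1) → Fin nbar, Function.Injective f →
      (∀ i, f i ≠ estar) →
      ∀ x : Fin α ⊕ (Fin (nbar - dbar - 1) × Fin β) → F,
        (∀ p, (∑ a, Pstar p a * x (Sum.inl a)) +
          ∑ q : Fin (nbar - dbar - 1) × Fin β, P (f q.1) p q.2 * x (Sum.inr q) = 0) →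
        x = 0)
    (Hset : Finset (Fin nbar)) (hH : Hset.card = dbar) (hHe : estar ∉ Hset)
    (c c' : Fin nbar × Fin u → Fin α → F)
    (hcpar : ∑ i, (Hm i).mulVec (c i) = 0)
    (hc'par : ∑ i, (Hm i).mulVec (c' i) = 0)
    (hdown : ∀ e ∈ Hset,
      (R e).mulVec (∑ g, (Q (e, g)).mulVec (c (e, g))) =
      (R e).mulVec (∑ g, (Q (e, g)).mulVec (c' (e, g)))) :
    ∑ g, (Q (estar, g)).mulVec (c (estar, g)) =
      ∑ g, (Q (estar, g)).mulVec (c' (estar, g)) := by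
  have hpar : ∑ i, (Hm i).mulVec ((c - c') i) = 0 := by
    simp only [Pi.sub_apply, Matrix.mulVec_sub, Finset.sum_sub_distrib, hcpar, hc'par, sub_zero]
  have hHset : ∀ e ∈ Hset, (P e).mulVec ((R e).mulVec (rackSum Q (c - c') e)) = 0 :=
    fun e he => by
      rw [rackSum_sub, Matrix.mulVec_sub, rackSum, rackSum, hdown e he, sub_self,
        Matrix.mulVec_zero]
  have hHsub : Hset ⊆ {estar}ᶜ := fun e he => Finset.mem_compl.mpr fun h =>
    hHe (Finset.mem_singleton.mp h ▸ he)
  have hrel := rack_relation_of_parity S Hm Pstar P R Q estar ha hb (c - c') hpar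
  rw [← Finset.sum_sdiff hHsub, Finset.sum_eq_zero hHset, add_zero] at hrel
  have hT : ({estar}ᶜ \ Hset).card = nbar - dbar - 1 := by
    rw [Finset.card_sdiff_of_subset hHsub, Finset.card_compl, Finset.card_singleton,
      Fintype.card_fin, hH]
    omega
  have hzero := HasIndependentBlocks.eq_zero hc hT (by simp) hrel
  rwa [rackSum_sub, sub_eq_zero] at hzero

theorem repair_framework
    (F : Type*) [Field F] (nbar u kbar dbar u0 α β : ℕ)
    (hu : 1 ≤ u) (hu0 : u0 < u) (hkd : kbar ≤ dbar) (hdn : dbar ≤ nbar - 1)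
    (hkn : kbar < nbar) (hβ : 1 ≤ β) (hβα : β * (dbar - kbar + 1) = α)
    (Hm : Fin nbar × Fin u → Matrix (Fin ((nbar * u - (kbar * u + u0)) * α)) (Fin α) F)
    (estar : Fin nbar)
    (S : Matrix (Fin ((nbar - kbar) * β)) (Fin ((nbar * u - (kbar * u + u0)) * α)) F)
    (Pstar : Matrix (Fin ((nbar - kbar) * β)) (Fin α) F)
    (P : Fin nbar → Matrix (Fin ((nbar - kbar) * β)) (Fin β) F)
    (R : Fin nbar → Matrix (Fin β) (Fin α) F)
    (Q : Fin nbar × Fin u → Matrix (Fin α) (Fin α) F)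
    (ha : ∀ g, S * Hm (estar, g) = Pstar * Q (estar, g))
    (haQ : ∀ g, IsUnit (Q (estar, g)))
    (hb : ∀ e, e ≠ estar → ∀ g, S * Hm (e, g) = P e * R e * Q (e, g))
    (hc : ∀ f : Fin (nbar - dbar - 1) → Fin nbar, Function.Injective f →
      (∀ i, f i ≠ estar) →
      ∀ x : Fin α ⊕ (Fin (nbar - dbar - 1) × Fin β) → F,
        (∀ p, (∑ a, Pstar p a * x (Sum.inl a)) +
          ∑ q : Fin (nbar - dbar - 1) × Fin β, P (f q.1) p q.2 * x (Sum.inr q) = 0) →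
        x = 0)
    (Hset : Finset (Fin nbar)) (hH : Hset.card = dbar) (hHe : estar ∉ Hset)
    (c c' : Fin nbar × Fin u → Fin α → F)
    (hcpar : ∑ i, (Hm i).mulVec (c i) = 0)
    (hc'par : ∑ i, (Hm i).mulVec (c' i) = 0)
    (hdown : ∀ e ∈ Hset,
      (R e).mulVec (∑ g, (Q (e, g)).mulVec (c (e, g))) =
      (R e).mulVec (∑ g, (Q (e, g)).mulVec (c' (e, g)))) :
    ∑ g, (Q (estar, g)).mulVec (c (estar, g)) =
      ∑ g, (Q (estar, g)).mulVec (c' (estar, g)) :=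
  repair_framework_general F nbar u kbar dbar u0 α β Hm estar S Pstar P R Q ha hb hc Hset hH hHe c
    c' hcpar hc'par hdown
end
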